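/- arXiv:2207.12179 — 2 statements merged into one kernel-verified Lean document; each statement's English description precedes it below -/
import Mathlib

section
/- Suppose all students follow straightforward strategies in the time-constrained dynamic mechanism. Then for every college, the cutoff sequence over the rounds of the mechanism is weakly increasing (cutoffs never decrease). -/
open Finset
open scoped Classical

/-- A common-priority college admissions market: `n` students (index `0` is the
highest priority / highest score), `m` colleges with capacities `q`, and for each
student an injective ranking of the options in `Option (Fin m)` (`none` = being
unassigned / matched to oneself); a lower rank means more preferred. -/
structure Market (n m : ℕ) where
  q : Fin m → ℕ
  rank : Fin n → Option (Fin m) → ℕ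
  rank_inj : ∀ i, Function.Injective (rank i)

namespace Market

variable {n m : ℕ}

/-- `i` strictly prefers option `a` to option `b`. -/
def Prefers (M : Market n m) (i : Fin n) (a b : Option (Fin m)) : Prop :=
  M.rank i a < M.rank i b

/-- A matching: each student gets a college or `none`, capacities respected. -/
def IsMatching (M : Market n m) (μ : Fin n → Option (Fin m)) : Prop :=
  ∀ c : Fin m, (univ.filter fun i => μ i = some c).card ≤ M.q c

/-- Individual rationality. -/
def IR (M : Market n m) (μ : Fin n → Option (Fin m)) : Prop :=
  ∀ i c, μ i = some c → M.Prefers i (some c) none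

/-- `(i, c)` blocks `μ`: `i` prefers `c` to her assignment and `c` has a free
seat or holds a student of strictly lower priority. -/
def Blocks (M : Market n m) (μ : Fin n → Option (Fin m)) (i : Fin n) (c : Fin m) : Prop :=
  M.Prefers i (some c) (μ i) ∧
    ((univ.filter fun j => μ j = some c).card < M.q c ∨ ∃ j, μ j = some c ∧ i < j)

/-- Stability: a matching, individually rational, with no blocking pair. -/
def Stable (M : Market n m) (μ : Fin n → Option (Fin m)) : Prop :=
  M.IsMatching μ ∧ M.IR μ ∧ ∀ i c, ¬ M.Blocks μ i c

/-- Given an application profile, student `i` is tentatively held: she applies to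
some college `c` and fewer than `q c` higher-priority students apply to `c`. -/
def Held (M : Market n m) (app : Fin n → Option (Fin m)) (i : Fin n) : Prop :=
  ∃ c, app i = some c ∧ (univ.filter fun j => app j = some c ∧ j < i).card < M.q c

/-- The tentative matching induced by an application profile. -/
noncomputable def tentative (M : Market n m) (app : Fin n → Option (Fin m)) (i : Fin n) :
    Option (Fin m) :=
  if M.Held app i then app i else none

/-- `i` meets the current cutoff of `c`: `c` has a free seat in the tentative
matching, or tentatively holds a student of lower priority than `i`. -/
def Feasible (M : Market n m) (app : Fin n → Option (Fin m)) (i : Fin n) (c : Fin m) : Prop :=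
  (univ.filter fun j => M.tentative app j = some c).card < M.q c ∨
    ∃ j, M.tentative app j = some c ∧ i < j

/-- The option `o` is available to `i`: `none` always is, a college iff `i`
meets its cutoff. -/
def FeasibleOpt (M : Market n m) (app : Fin n → Option (Fin m)) (i : Fin n)
    (o : Option (Fin m)) : Prop :=
  o = none ∨ ∃ c, o = some c ∧ M.Feasible app i c

/-- One round of simultaneous straightforward revision: students who are not
rejected keep their application; every rejected student applies to her most
preferred option among those whose cutoff she meets. -/
def Step (M : Market n m) (app app' : Fin n → Option (Fin m)) : Prop :=
  ∀ i,
    (M.tentative app i = app i → app' i = app i) ∧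
    (M.tentative app i ≠ app i →
      M.FeasibleOpt app i (app' i) ∧
        ∀ o, M.FeasibleOpt app i o → M.rank i (app' i) ≤ M.rank i o)

/-- A run of the TCDM under straightforward strategies: `app t` is the profile of
applications in round `t + 1`; in round one every student applies to her most
preferred option, and each later round is a straightforward revision.  The
outcome of the TCDM with round limit `T ≥ 1` is `M.tentative (app (T - 1))`. -/
def IsRun (M : Market n m) (app : ℕ → Fin n → Option (Fin m)) : Prop :=
  (∀ i o, M.rank i (app 0 i) ≤ M.rank i o) ∧ ∀ t, M.Step (app t) (app (t + 1))

/-- Admission cutoff of college `c` (student `i` has score `n - i`): the lowest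
score among tentatively held students if `c` is at capacity, `0` otherwise. -/
noncomputable def cutoff (M : Market n m) (app : Fin n → Option (Fin m)) (c : Fin m) : ℕ :=
  if h : M.q c ≤ (univ.filter fun j => M.tentative app j = some c).card ∧
      (univ.filter fun j => M.tentative app j = some c).Nonempty then
    n - ((univ.filter fun j => M.tentative app j = some c).max' h.2 : ℕ)
  else 0

/-- Serial dictatorship outcome: in priority order each student receives her most
preferred option among `none` and the colleges not yet filled by
higher-priority students. -/
def IsSerialDictatorship (M : Market n m) (μ : Fin n → Option (Fin m)) : Prop :=
  ∀ i,
    (μ i = none ∨ ∃ c, μ i = some c ∧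
        (univ.filter fun j => j < i ∧ μ j = some c).card < M.q c) ∧
    ∀ o, (o = none ∨ ∃ c, o = some c ∧
        (univ.filter fun j => j < i ∧ μ j = some c).card < M.q c) →
      M.rank i (μ i) ≤ M.rank i o

end Market

/-- The market induced by capacities `q` and a profile `P` of strict preferences
over colleges (every college acceptable, `none` ranked last), where the
preference order of student `i` ranks college `c` in position `P i c`. -/
noncomputable def mkMarket {n m : ℕ} (q : Fin m → ℕ) (P : Fin n → Equiv.Perm (Fin m)) :
    Market n m where
  q := q
  rank := fun i o => o.elim m fun c => (P i c : ℕ)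
  rank_inj := by
    intro i a b h
    match a, b with
    | none, none => rfl
    | none, some c =>
      simp only [Option.elim] at h
      exact absurd h.symm (Nat.ne_of_lt (P i c).isLt)
    | some c, none =>
      simp only [Option.elim] at h
      exact absurd h (Nat.ne_of_lt (P i c).isLt)
    | some c, some d =>
      simp only [Option.elim] at h
      exact congrArg some ((P i).injective (Fin.val_injective h))

/-!
A college that is at capacity rejects none of the students it holds, and under straightforward
strategies an unrejected student repeats her application. So in the next round at least `q`
students apply to the college, it is again at capacity, and it holds its `q` best applicants.
Each of these is at least as good as some student held before, hence at least as good as the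
weakest of them: the cutoff cannot fall.
-/

namespace Finset

variable {α : Type*} [LinearOrder α]

def takeLeast (s : Finset α) (q : ℕ) : Finset α :=
  s.filter fun j => #(s.filter (· < j)) < q

theorem mem_takeLeast {s : Finset α} {q : ℕ} {j : α} :
    j ∈ s.takeLeast q ↔ j ∈ s ∧ #(s.filter (· < j)) < q :=
  mem_filter

theorem le_card_takeLeast {s : Finset α} {q : ℕ} (hq : q ≤ #s) : q ≤ #(s.takeLeast q) := by
  by_contra! hlt
  have hne : (s \ s.takeLeast q).Nonempty :=
    sdiff_nonempty_of_card_lt_card (hlt.trans_le hq)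
  set j := (s \ s.takeLeast q).min' hne
  have hj : j ∈ s ∧ j ∉ s.takeLeast q := mem_sdiff.1 (min'_mem _ hne)
  have hbelow : s.filter (· < j) ⊆ s.takeLeast q := fun k hk => by
    obtain ⟨hks, hkj⟩ := mem_filter.1 hk
    by_contra hkt
    exact (min'_le _ k (mem_sdiff.2 ⟨hks, hkt⟩)).not_gt hkj
  exact hj.2 (mem_takeLeast.2 ⟨hj.1, (card_le_card hbelow).trans_lt hlt⟩)

theorem exists_le_of_mem_takeLeast {s t : Finset α} {q : ℕ} {j : α} (hts : t ⊆ s)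
    (hq : q ≤ #t) (hj : j ∈ s.takeLeast q) : ∃ b ∈ t, j ≤ b := by
  by_contra! hlt
  have hsub : t ⊆ s.filter (· < j) := fun b hb => mem_filter.2 ⟨hts hb, hlt b hb⟩
  exact ((card_le_card hsub).trans_lt (mem_takeLeast.1 hj).2).not_ge hq

end Finset

namespace Market

variable {n m : ℕ} (M : Market n m)

theorem apply_eq_of_tentative_eq_some {app : Fin n → Option (Fin m)} {j : Fin n} {c : Fin m}
    (hj : M.tentative app j = some c) : app j = some c := by
  unfold tentative at hj
  split_ifs at hj
  exact hj

theorem tentative_eq_some_iff (app : Fin n → Option (Fin m)) (j : Fin n) (c : Fin m) :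
    M.tentative app j = some c ↔
      j ∈ (univ.filter fun k => app k = some c).takeLeast (M.q c) := by
  simp only [mem_takeLeast, mem_filter, mem_univ, true_and, filter_filter]
  unfold tentative Held
  split_ifs with hheld
  · obtain ⟨c', hc', hlt⟩ := hheld
    refine ⟨fun h => ?_, And.left⟩
    obtain rfl : c' = c := Option.some_injective _ (hc'.symm.trans h)
    exact ⟨h, hlt⟩
  · exact iff_of_false id fun h => hheld ⟨c, h⟩

theorem filter_tentative_eq_some (app : Fin n → Option (Fin m)) (c : Fin m) :
    (univ.filter fun j => M.tentative app j = some c) =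
      (univ.filter fun k => app k = some c).takeLeast (M.q c) := by
  ext j
  simp only [mem_filter, mem_univ, true_and, tentative_eq_some_iff]

theorem cutoff_le_cutoff_of_held_reapply {app app' : Fin n → Option (Fin m)} {c : Fin m}
    (hreapply : ∀ j, M.tentative app j = some c → app' j = some c) :
    M.cutoff app c ≤ M.cutoff app' c := by
  set H := univ.filter fun j => M.tentative app j = some c
  set H' := univ.filter fun j => M.tentative app' j = some c
  set A' := univ.filter fun k => app' k = some c
  by_cases hfull : M.q c ≤ #H ∧ H.Nonempty
  swap
  · rw [cutoff, dif_neg hfull]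
    exact Nat.zero_le _
  have hHA' : H ⊆ A' := fun j hj => mem_filter.2 ⟨mem_univ j, hreapply j (mem_filter.1 hj).2⟩
  have hH' : H' = A'.takeLeast (M.q c) := M.filter_tentative_eq_some app' c
  have hqpos : 0 < M.q c := by
    obtain ⟨j, hj⟩ := hfull.2
    exact Nat.zero_lt_of_lt
      (mem_takeLeast.1 ((M.tentative_eq_some_iff app j c).1 (mem_filter.1 hj).2)).2
  have hfull' : M.q c ≤ #H' ∧ H'.Nonempty := by
    have hle : M.q c ≤ #H' := hH' ▸ le_card_takeLeast (hfull.1.trans (card_le_card hHA'))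
    exact ⟨hle, card_pos.1 (hqpos.trans_le hle)⟩
  have hmax : H'.max' hfull'.2 ≤ H.max' hfull.2 := by
    have hmem : H'.max' hfull'.2 ∈ A'.takeLeast (M.q c) := hH' ▸ max'_mem _ _
    obtain ⟨b, hb, hle⟩ := exists_le_of_mem_takeLeast hHA' hfull.1 hmem
    exact hle.trans (le_max' H b hb)
  rw [cutoff, cutoff, dif_pos hfull, dif_pos hfull']
  exact Nat.sub_le_sub_left (by exact_mod_cast hmax) n

variable {M} in
theorem Step.apply_eq_of_tentative_eq_some {app app' : Fin n → Option (Fin m)}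
    (hstep : M.Step app app') {j : Fin n} {c : Fin m} (hj : M.tentative app j = some c) :
    app' j = some c := by
  have happ := M.apply_eq_of_tentative_eq_some hj
  rw [(hstep j).1 (hj.trans happ.symm), happ]

end Market

/-- under straightforward strategies, every college's cutoff
sequence over the rounds of the TCDM is weakly increasing. -/
theorem tcdm_cutoffs_monotone (n m : ℕ) (M : Market n m)
    (app : ℕ → Fin n → Option (Fin m)) (hrun : M.IsRun app) :
    ∀ (c : Fin m) (t : ℕ), M.cutoff (app t) c ≤ M.cutoff (app (t + 1)) c :=
  fun _ t => M.cutoff_le_cutoff_of_held_reapply fun _ hj =>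
    (hrun.2 t).apply_eq_of_tentative_eq_some hj
end

section
/- The matching produced by the TCDM with a binding round limit under straightforward strategies need not be stable: there exists a market and T such that the TCDM outcome has a blocking pair. -/
open Finset
open scoped Classical

/-! Two students with the common preference `0 ≻ 1 ≻ ∅` over two colleges with one seat each.
In round one both apply to college `0`, which keeps the higher-priority student `0` and rejects
student `1`. With round limit `T = 1` the mechanism stops before student `1` can turn to
college `1`, which is left empty, so `(1, 1)` blocks the outcome. -/

namespace Market

variable {n m : ℕ} (M : Market n m)

theorem tentative_of_held {app : Fin n → Option (Fin m)} {i : Fin n} (h : M.Held app i) :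
    M.tentative app i = app i :=
  if_pos h

theorem tentative_of_not_held {app : Fin n → Option (Fin m)} {i : Fin n} (h : ¬ M.Held app i) :
    M.tentative app i = none :=
  if_neg h

theorem held_of_forall_lt_ne {app : Fin n → Option (Fin m)} {i : Fin n} {c : Fin m}
    (hi : app i = some c) (hq : 0 < M.q c) (hhigher : ∀ j < i, app j ≠ some c) :
    M.Held app i := by
  refine ⟨c, hi, ?_⟩
  rwa [filter_false_of_mem fun j _ hj => hhigher j hj.2 hj.1, card_empty]

theorem not_held_of_lt {app : Fin n → Option (Fin m)} {i j : Fin n} {c : Fin m}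
    (hq : M.q c ≤ 1) (hi : app i = some c) (hj : app j = some c) (hji : j < i) :
    ¬ M.Held app i := by
  rintro ⟨c', hc', hcard⟩
  obtain rfl : c' = c := Option.some_injective _ (hc'.symm.trans hi)
  have hpos : 0 < (univ.filter fun k => app k = some c' ∧ k < i).card :=
    card_pos.mpr ⟨j, mem_filter.mpr ⟨mem_univ j, hj, hji⟩⟩
  omega

theorem tentative_eq_self_of_injective {app : Fin n → Option (Fin m)} (hq : ∀ c, 0 < M.q c)
    (happ : Function.Injective app) : M.tentative app = app := by
  funext i
  cases hi : app i with
  | none => exact M.tentative_of_not_held fun ⟨_, hc, _⟩ => by simp [hi] at hc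
  | some c =>
    rw [← hi]
    refine M.tentative_of_held (M.held_of_forall_lt_ne hi (hq c) fun j hj hjc => ?_)
    exact hj.ne (happ (hjc.trans hi.symm))

theorem step_self_of_tentative_eq {app : Fin n → Option (Fin m)} (h : M.tentative app = app) :
    M.Step app app :=
  fun i => ⟨fun _ => rfl, fun hne => absurd (congrFun h i) hne⟩

theorem blocks_of_empty {μ : Fin n → Option (Fin m)} {i : Fin n} {c : Fin m}
    (hpref : M.Prefers i (some c) (μ i)) (hq : 0 < M.q c) (hempty : ∀ j, μ j ≠ some c) :
    M.Blocks μ i c := by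
  refine ⟨hpref, Or.inl ?_⟩
  rwa [filter_false_of_mem fun j _ => hempty j, card_empty]

end Market

namespace TwoStudentExample

noncomputable def market : Market 2 2 :=
  mkMarket (fun _ => 1) (fun _ => Equiv.refl _)

def run : ℕ → Fin 2 → Option (Fin 2)
  | 0 => fun _ => some 0
  | _ + 1 => some

theorem market_q (c : Fin 2) : market.q c = 1 := rfl

theorem market_rank_some (i c : Fin 2) : market.rank i (some c) = c := rfl

theorem market_rank_none (i : Fin 2) : market.rank i none = 2 := rfl

theorem tentative_run_zero : market.tentative (run 0) = ![some 0, none] := by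
  funext i
  fin_cases i
  · exact market.tentative_of_held <|
      market.held_of_forall_lt_ne rfl (by simp [market_q]) fun j hj => absurd hj (Fin.not_lt_zero j)
  · exact market.tentative_of_not_held <|
      market.not_held_of_lt (market_q 0).le (j := 0) rfl rfl (by decide)

theorem tentative_run_succ (t : ℕ) : market.tentative (run (t + 1)) = run (t + 1) :=
  market.tentative_eq_self_of_injective (fun c => by simp [market_q]) (Option.some_injective _)

theorem not_feasible_run_zero : ¬ market.Feasible (run 0) 1 0 := by
  rw [Market.Feasible, tentative_run_zero]
  decide

theorem step_run_zero : market.Step (run 0) (run 1) := by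
  intro i
  fin_cases i
  · exact ⟨fun _ => rfl, fun h => absurd (congrFun tentative_run_zero 0) h⟩
  · refine ⟨fun h => absurd h (by rw [tentative_run_zero]; decide), fun _ => ⟨?_, ?_⟩⟩
    · refine Or.inr ⟨1, rfl, Or.inl ?_⟩
      rw [tentative_run_zero, market_q]
      decide
    · rintro o (rfl | ⟨c, rfl, hc⟩)
      · simp [run, market_rank_some, market_rank_none]
      · have hc1 : c = 1 := by
          fin_cases c
          · exact absurd hc not_feasible_run_zero
          · rfl
        simp [run, hc1]

theorem isRun_run : market.IsRun run := by
  refine ⟨fun i o => by simp [run, market_rank_some], ?_⟩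
  rintro (_ | t)
  · exact step_run_zero
  · exact market.step_self_of_tentative_eq (tentative_run_succ t)

theorem blocks_run_zero : market.Blocks (market.tentative (run 0)) 1 1 := by
  rw [tentative_run_zero]
  refine market.blocks_of_empty ?_ (by simp [market_q]) ?_
  · simp [Market.Prefers, market_rank_some, market_rank_none]
  · decide

end TwoStudentExample

/-- the TCDM outcome with a binding round limit under
straightforward strategies need not be stable: some market and `T` yield an
outcome with a blocking pair. -/
theorem tcdm_not_always_stable :
    ∃ (n m : ℕ) (M : Market n m) (T : ℕ) (app : ℕ → Fin n → Option (Fin m)),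
      1 ≤ T ∧ M.IsRun app ∧
      ∃ (i : Fin n) (c : Fin m), M.Blocks (M.tentative (app (T - 1))) i c :=
  ⟨2, 2, TwoStudentExample.market, 1, TwoStudentExample.run, le_rfl,
    TwoStudentExample.isRun_run, 1, 1, TwoStudentExample.blocks_run_zero⟩
end
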